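/- Let m ≥ 2, k ∈ {1,…,m−1}, and let A ⊆ {1,…,2^m−1} be a set of 2^k consecutive integers. Then every gap of the set ψ(A) ∪ {0,1} is at most 7/2^{k+2}, where ψ(n) = Σ_{i=1}^m ((e_{i−1} + e_i) mod 2)/2^i with e₀ := 0. -/

import Mathlib

/-- The `i`-th digit (1-based) of `n` in base `b`, with the convention that the
`0`-th digit is `0`. -/
def nthDigit (b n i : ℕ) : ℕ := if i = 0 then 0 else n / b ^ (i - 1) % b
/-- The map `ψ(n) = Σ_{i=1}^m ((e_{i-1} + e_i) mod 2)/2^i` with the convention `e₀ = 0`. -/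
noncomputable def psiMap (m n : ℕ) : ℝ :=
  ∑ i ∈ Finset.Icc 1 m,
    (((nthDigit 2 n (i - 1) + nthDigit 2 n i) % 2 : ℕ) : ℝ) / (2 : ℝ) ^ i

/-!
Write `d_i(n) = (e_{i-1} + e_i) mod 2` for the digits of `ψ(n)`. The first `k` of them, read as a
binary integer `G(n) < 2^k`, depend only on `n mod 2^k` and determine it (a Gray code), so
`ψ(n) = G(n)/2^k + T(n)` with a tail `0 ≤ T(n) < 2^{-k}`, and the `2^k` consecutive integers of
`A` realise every value of `G`. Hence a point `ψ(n) < 1` of the set either has `G(n) = 2^k - 1`, and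
then `1 - ψ(n) ≤ 2^{-k}`, or is followed by `ψ(n')` with `n' ∈ A`, `G(n') = G(n) + 1`. Because
`⌊n/2^k⌋` and `⌊n'/2^k⌋` differ by at most one, `T(n') ≤ T(n) + 3/2^{k+2}`: splitting off the
digits `k+1, k+2` loses at most `2/2^{k+2} + 1/2^{k+2}`, except when `d_{k+2}(n) = 0` and
`d_{k+2}(n') = 1`, which forces `⌊n/2^{k+1}⌋ = ⌊n'/2^{k+1}⌋` and so equal remaining tails.
Altogether every point of the set below `1` has a successor within `2^{-k} + 3/2^{k+2} = 7/2^{k+2}`.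
-/

open Finset

def grayDigit (n i : ℕ) : ℕ := (nthDigit 2 n (i - 1) + nthDigit 2 n i) % 2

lemma grayDigit_le_one (n i : ℕ) : grayDigit n i ≤ 1 :=
  Nat.lt_succ_iff.mp (Nat.mod_lt _ two_pos)

lemma nthDigit_two_le_one (n i : ℕ) : nthDigit 2 n i ≤ 1 := by
  unfold nthDigit
  split
  · omega
  · exact Nat.lt_succ_iff.mp (Nat.mod_lt _ two_pos)

@[simp]
lemma nthDigit_two_succ (n i : ℕ) : nthDigit 2 n (i + 1) = n / 2 ^ i % 2 := rfl

lemma nthDigit_two_mod_two_pow {i k : ℕ} (h : i ≤ k) (n : ℕ) :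
    nthDigit 2 (n % 2 ^ k) i = nthDigit 2 n i := by
  cases i with
  | zero => rfl
  | succ i =>
    simp only [nthDigit_two_succ]
    rw [show k = i + 1 + (k - (i + 1)) by omega, pow_add, pow_succ, mul_assoc,
      Nat.mod_mul_right_div_self, Nat.mod_mul_right_mod]

lemma nthDigit_two_eq_of_div_eq {n n' j i : ℕ} (h : n / 2 ^ j = n' / 2 ^ j) (hi : j < i) :
    nthDigit 2 n i = nthDigit 2 n' i := by
  obtain ⟨l, rfl⟩ : ∃ l, i = j + l + 1 := ⟨i - j - 1, by omega⟩
  simp only [nthDigit_two_succ, pow_add, ← Nat.div_div_eq_div_mul, h]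

lemma grayDigit_eq_of_div_eq {n n' j i : ℕ} (h : n / 2 ^ j = n' / 2 ^ j) (hi : j + 1 < i) :
    grayDigit n i = grayDigit n' i := by
  rw [grayDigit, grayDigit, nthDigit_two_eq_of_div_eq h (by omega),
    nthDigit_two_eq_of_div_eq h (by omega)]

lemma grayDigit_add_two (n k : ℕ) :
    grayDigit n (k + 2) = (n / 2 ^ k % 2 + n / 2 ^ k / 2 % 2) % 2 := by
  simp [grayDigit, pow_succ, Nat.div_div_eq_div_mul]

def grayPrefix : ℕ → ℕ → ℕ
  | 0, _ => 0
  | k + 1, n => 2 * grayPrefix k n + grayDigit n (k + 1)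

lemma grayPrefix_lt (k n : ℕ) : grayPrefix k n < 2 ^ k := by
  induction k with
  | zero => simp [grayPrefix]
  | succ k ih =>
    have := grayDigit_le_one n (k + 1)
    rw [grayPrefix, pow_succ]
    omega

lemma grayPrefix_zero_right (k : ℕ) : grayPrefix k 0 = 0 := by
  induction k with
  | zero => rfl
  | succ k ih => simp [grayPrefix, ih, grayDigit, nthDigit]

lemma mod_two_pow_eq_of_grayPrefix_eq {k u v : ℕ} (h : grayPrefix k u = grayPrefix k v) :
    u % 2 ^ k = v % 2 ^ k := by
  induction k with
  | zero => simp [Nat.mod_one]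
  | succ k ih =>
    have hu := grayDigit_le_one u (k + 1)
    have hv := grayDigit_le_one v (k + 1)
    simp only [grayPrefix] at h
    have hmod := ih (by omega)
    have hdigit : grayDigit u (k + 1) = grayDigit v (k + 1) := by omega
    have hk : nthDigit 2 u k = nthDigit 2 v k := by
      rw [← nthDigit_two_mod_two_pow le_rfl, hmod, nthDigit_two_mod_two_pow le_rfl]
    have := nthDigit_two_le_one u k
    have := nthDigit_two_le_one v k
    simp only [grayDigit, Nat.add_sub_cancel, nthDigit_two_succ, hk] at hdigit
    have hbit : u / 2 ^ k % 2 = v / 2 ^ k % 2 := by omega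
    rw [Nat.mod_pow_succ, Nat.mod_pow_succ, hmod, hbit]

lemma eq_of_mod_eq_of_lt_add {N a n n' : ℕ} (hn : a ≤ n ∧ n < a + N) (hn' : a ≤ n' ∧ n' < a + N)
    (h : n % N = n' % N) : n = n' := by
  wlog hle : n ≤ n' generalizing n n'
  · exact (this hn' hn h.symm (by omega)).symm
  have hdvd : N ∣ n' - n := Nat.dvd_of_mod_eq_zero (Nat.sub_mod_eq_zero_of_mod_eq h.symm)
  have := Nat.eq_zero_of_dvd_of_lt hdvd (by omega)
  omega

lemma exists_grayPrefix_eq (a : ℕ) {k w : ℕ} (hw : w < 2 ^ k) :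
    ∃ n, (a ≤ n ∧ n < a + 2 ^ k) ∧ grayPrefix k n = w := by
  have hinj : Set.InjOn (grayPrefix k) (Ico a (a + 2 ^ k) : Set ℕ) := fun n hn n' hn' h => by
    simp only [coe_Ico, Set.mem_Ico] at hn hn'
    exact eq_of_mod_eq_of_lt_add hn hn' (mod_two_pow_eq_of_grayPrefix_eq h)
  obtain ⟨n, hn, rfl⟩ := surjOn_of_injOn_of_card_le (t := range (2 ^ k)) (grayPrefix k)
    (fun n _ => by simpa using grayPrefix_lt k n) hinj (by simp) (by simpa using hw)
  exact ⟨n, by simpa using hn, rfl⟩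

noncomputable def grayTail (m k n : ℕ) : ℝ := ∑ i ∈ Ioc k m, (grayDigit n i : ℝ) / 2 ^ i

lemma one_div_two_pow_eq_four_div (k : ℕ) : (1 : ℝ) / 2 ^ k = 4 / 2 ^ (k + 2) := by
  rw [pow_add]; field_simp; norm_num

lemma grayTail_nonneg (m k n : ℕ) : 0 ≤ grayTail m k n :=
  sum_nonneg fun _ _ => by positivity

lemma grayDigit_div_le (n i : ℕ) : (grayDigit n i : ℝ) / 2 ^ i ≤ 1 / 2 ^ i := by
  gcongr
  exact_mod_cast grayDigit_le_one n i

lemma grayTail_eq_add {m k : ℕ} (h : k < m) (n : ℕ) :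
    grayTail m k n = (grayDigit n (k + 1) : ℝ) / 2 ^ (k + 1) + grayTail m (k + 1) n := by
  rw [grayTail, grayTail, ← sum_Ioc_consecutive _ k.le_succ h, sum_Ioc_succ_top le_rfl,
    Ioc_self, sum_empty, zero_add]

lemma grayTail_of_le {m k : ℕ} (h : m ≤ k) (n : ℕ) : grayTail m k n = 0 := by
  rw [grayTail, Ioc_eq_empty_of_le h, sum_empty]

lemma grayTail_eq_add_add {m k : ℕ} (h : k + 2 ≤ m) (n : ℕ) :
    grayTail m k n = (grayDigit n (k + 1) : ℝ) / 2 ^ (k + 1) +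
      (grayDigit n (k + 2) : ℝ) / 2 ^ (k + 2) + grayTail m (k + 2) n := by
  rw [grayTail_eq_add (by omega) n, grayTail_eq_add (show k + 1 < m by omega) n, ← add_assoc]

lemma grayTail_le {m k : ℕ} (h : k ≤ m) (n : ℕ) : grayTail m k n ≤ 1 / 2 ^ k - 1 / 2 ^ m := by
  induction m, h using Nat.le_induction with
  | base => simp [grayTail]
  | succ m hkm ih =>
    rw [grayTail, sum_Ioc_succ_top hkm, ← grayTail]
    have := grayDigit_div_le n (m + 1)
    have : (1 : ℝ) / 2 ^ m = 2 * (1 / 2 ^ (m + 1)) := by rw [pow_succ]; field_simp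
    linarith

lemma grayTail_lt {m k : ℕ} (h : k ≤ m) (n : ℕ) : grayTail m k n < 1 / 2 ^ k := by
  have := grayTail_le h n
  have : (0 : ℝ) < 1 / 2 ^ m := by positivity
  linarith

lemma grayTail_congr {m i j n n' : ℕ} (h : n / 2 ^ j = n' / 2 ^ j) (hi : j < i) :
    grayTail m i n = grayTail m i n' :=
  sum_congr rfl fun l hl => by rw [grayDigit_eq_of_div_eq h (by grind)]

lemma sum_grayDigit_div (k n : ℕ) :
    ∑ i ∈ Ioc 0 k, (grayDigit n i : ℝ) / 2 ^ i = grayPrefix k n / 2 ^ k := by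
  induction k with
  | zero => simp [grayPrefix]
  | succ k ih =>
    rw [sum_Ioc_succ_top k.zero_le, ih, grayPrefix, pow_succ]
    push_cast
    field_simp

lemma psiMap_eq {m k : ℕ} (h : k ≤ m) (n : ℕ) :
    psiMap m n = grayPrefix k n / 2 ^ k + grayTail m k n := by
  have hIcc : Icc 1 m = Ioc 0 m := Icc_add_one_left_eq_Ioc 0 m
  rw [psiMap, hIcc, ← sum_Ioc_consecutive _ k.zero_le h, ← sum_grayDigit_div]
  rfl

lemma psiMap_lt_one (m n : ℕ) : psiMap m n < 1 := by
  simpa [psiMap_eq m.zero_le, grayPrefix] using grayTail_lt m.zero_le n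

lemma psiMap_pos {m n : ℕ} (h1 : 1 ≤ n) (h2 : n < 2 ^ m) : 0 < psiMap m n := by
  have hne : grayPrefix m n ≠ 0 := fun h0 => by
    have := mod_two_pow_eq_of_grayPrefix_eq (h0.trans (grayPrefix_zero_right m).symm)
    rw [Nat.mod_eq_of_lt h2, Nat.zero_mod] at this
    omega
  rw [psiMap_eq le_rfl, grayTail_of_le le_rfl, add_zero]
  positivity

lemma div_two_pow_succ_eq_of_grayDigit {k n n' : ℕ} (h1 : n / 2 ^ k ≤ n' / 2 ^ k + 1)
    (h2 : n' / 2 ^ k ≤ n / 2 ^ k + 1) (hn : grayDigit n (k + 2) = 0)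
    (hn' : grayDigit n' (k + 2) = 1) : n / 2 ^ (k + 1) = n' / 2 ^ (k + 1) := by
  rw [grayDigit_add_two] at hn hn'
  rw [pow_succ, ← Nat.div_div_eq_div_mul, ← Nat.div_div_eq_div_mul]
  omega

lemma grayTail_le_add_of_div_le {m k n n' : ℕ} (hk : k < m) (h1 : n / 2 ^ k ≤ n' / 2 ^ k + 1)
    (h2 : n' / 2 ^ k ≤ n / 2 ^ k + 1) :
    grayTail m k n' ≤ grayTail m k n + 3 / 2 ^ (k + 2) := by
  have hhalf : (1 : ℝ) / 2 ^ (k + 1) = 2 * (1 / 2 ^ (k + 2)) := by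
    rw [pow_succ 2 (k + 1)]; field_simp
  have hthree : (3 : ℝ) / 2 ^ (k + 2) = 3 * (1 / 2 ^ (k + 2)) := by ring
  have hpos : (0 : ℝ) < 1 / 2 ^ (k + 2) := by positivity
  have hd' := grayDigit_div_le n' (k + 1)
  have hd : (0 : ℝ) ≤ grayDigit n (k + 1) / 2 ^ (k + 1) := by positivity
  rcases Nat.lt_or_ge (k + 1) m with hk' | hm
  swap
  · rw [grayTail_eq_add hk n, grayTail_eq_add hk n', grayTail_of_le hm, grayTail_of_le hm]
    linarith
  rw [grayTail_eq_add_add hk' n, grayTail_eq_add_add hk' n']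
  have := grayTail_nonneg m (k + 2) n
  by_cases hcrit : grayDigit n (k + 2) = 0 ∧ grayDigit n' (k + 2) = 1
  · -- `n` and `n'` agree from bit `k + 1` on, so their tails beyond digit `k + 2` coincide
    rw [grayTail_congr (div_two_pow_succ_eq_of_grayDigit h1 h2 hcrit.1 hcrit.2) (by omega), hcrit.1,
      hcrit.2]
    simp only [Nat.cast_zero, Nat.cast_one, zero_div]
    linarith
  · have hle : (grayDigit n' (k + 2) : ℝ) / 2 ^ (k + 2) ≤ grayDigit n (k + 2) / 2 ^ (k + 2) := by
      have := grayDigit_le_one n (k + 2)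
      have := grayDigit_le_one n' (k + 2)
      gcongr
      exact_mod_cast (by omega : grayDigit n' (k + 2) ≤ grayDigit n (k + 2))
    have := grayTail_lt (show k + 2 ≤ m by omega) n'
    linarith

lemma div_le_div_add_one_of_lt_add {N n n' : ℕ} (hN : 0 < N) (h : n < n' + N) :
    n / N ≤ n' / N + 1 :=
  (Nat.add_div_right n' hN) ▸ Nat.div_le_div_right h.le

lemma exists_psiMap_mem_Ioc {m k a n : ℕ} (hk : k < m) (hn : a ≤ n ∧ n < a + 2 ^ k)
    (hw : grayPrefix k n + 1 < 2 ^ k) :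
    ∃ n', (a ≤ n' ∧ n' < a + 2 ^ k) ∧
      psiMap m n' ∈ Set.Ioc (psiMap m n) (psiMap m n + 7 / 2 ^ (k + 2)) := by
  obtain ⟨n', hn', hw'⟩ := exists_grayPrefix_eq a hw
  have hpos : 0 < 2 ^ k := Nat.two_pow_pos k
  have htail := grayTail_le_add_of_div_le (m := m) (n := n) (n' := n') hk
    (div_le_div_add_one_of_lt_add hpos (by omega)) (div_le_div_add_one_of_lt_add hpos (by omega))
  have := grayTail_lt hk.le n
  have := grayTail_nonneg m k n'
  have hstep : (grayPrefix k n' : ℝ) / 2 ^ k = grayPrefix k n / 2 ^ k + 1 / 2 ^ k := by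
    rw [hw']; push_cast; ring
  have hquarter := one_div_two_pow_eq_four_div k
  have hseven : (7 : ℝ) / 2 ^ (k + 2) = 4 / 2 ^ (k + 2) + 3 / 2 ^ (k + 2) := by ring
  refine ⟨n', hn', ?_, ?_⟩ <;> rw [psiMap_eq hk.le, psiMap_eq hk.le] <;> linarith

lemma exists_psiMap_mem_Ioc_zero {m k a : ℕ} (hk : k < m) (ha1 : 1 ≤ a) (ha2 : a + 2 ^ k ≤ 2 ^ m) :
    ∃ n, (a ≤ n ∧ n < a + 2 ^ k) ∧ psiMap m n ∈ Set.Ioc 0 (1 / 2 ^ k) := by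
  obtain ⟨n, hn, hw⟩ := exists_grayPrefix_eq a (Nat.two_pow_pos k)
  refine ⟨n, hn, psiMap_pos (by omega) (by omega), ?_⟩
  rw [psiMap_eq hk.le, hw, Nat.cast_zero, zero_div, zero_add]
  exact (grayTail_lt hk.le n).le

lemma one_sub_le_psiMap {m k n : ℕ} (hk : k ≤ m) (hw : 2 ^ k ≤ grayPrefix k n + 1) :
    1 - 1 / 2 ^ k ≤ psiMap m n := by
  have hw' : (2 : ℝ) ^ k - 1 ≤ grayPrefix k n := by
    have : ((2 ^ k : ℕ) : ℝ) ≤ grayPrefix k n + 1 := by exact_mod_cast hw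
    push_cast at this
    linarith
  have : 1 - 1 / 2 ^ k ≤ (grayPrefix k n : ℝ) / 2 ^ k := by
    rw [one_sub_div (by positivity)]
    gcongr
  linarith [psiMap_eq hk n, grayTail_nonneg m k n]

lemma gap_le_of_forall_exists_mem_Ioc {S : Set ℝ} {b δ : ℝ} (hb : ∀ t ∈ S, t ≤ b)
    (h : ∀ x ∈ S, x < b → ∃ y ∈ S, y ∈ Set.Ioc x (x + δ)) :
    ∀ t₁ ∈ S, ∀ t₂ ∈ S, t₁ < t₂ → (∀ t ∈ S, ¬(t₁ < t ∧ t < t₂)) → t₂ - t₁ ≤ δ := by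
  intro t₁ ht₁ t₂ ht₂ hlt hgap
  obtain ⟨y, hyS, hy₁, hy₂⟩ := h t₁ ht₁ (hlt.trans_le (hb t₂ ht₂))
  by_contra! hδ
  exact hgap y hyS ⟨hy₁, by linarith⟩

theorem psi_gap_A (m k a : ℕ) (ha1 : 1 ≤ a) (ha2 : a + 2 ^ k ≤ 2 ^ m) (S : Set ℝ)
    (hS : S = {0, 1} ∪ (fun n => psiMap m n) '' {n : ℕ | a ≤ n ∧ n < a + 2 ^ k}) :
    ∀ t₁ ∈ S, ∀ t₂ ∈ S, t₁ < t₂ → (∀ t ∈ S, ¬(t₁ < t ∧ t < t₂)) →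
      t₂ - t₁ ≤ 7 / (2 : ℝ) ^ (k + 2) := by
  have hk : k < m := (Nat.pow_lt_pow_iff_right one_lt_two).mp (by omega)
  have hquarter : (1 : ℝ) / 2 ^ k ≤ 7 / 2 ^ (k + 2) := by
    rw [one_div_two_pow_eq_four_div]; gcongr; norm_num
  subst hS
  refine gap_le_of_forall_exists_mem_Ioc (b := 1) ?_ ?_
  · rintro t ((rfl | rfl) | ⟨n, -, rfl⟩)
    exacts [zero_le_one, le_rfl, (psiMap_lt_one m n).le]
  rintro x ((rfl | rfl) | ⟨n, hn, rfl⟩) hx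
  · obtain ⟨n, hn, hpos, hle⟩ := exists_psiMap_mem_Ioc_zero hk ha1 ha2
    exact ⟨_, Or.inr ⟨n, hn, rfl⟩, hpos, by linarith⟩
  · exact (lt_irrefl 1 hx).elim
  · by_cases hw : grayPrefix k n + 1 < 2 ^ k
    · obtain ⟨n', hn', hmem⟩ := exists_psiMap_mem_Ioc hk hn hw
      exact ⟨_, Or.inr ⟨n', hn', rfl⟩, hmem⟩
    · have := one_sub_le_psiMap (m := m) hk.le (not_lt.mp hw)
      exact ⟨1, Or.inl (Or.inr rfl), hx, by linarith⟩
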